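/- Let 0 < c < 1/2 and 1 ≤ q < p < q*, let Ω ⊂ ℝⁿ be a bounded Sobolev (p,q)-extension domain with associated set function Φ, and let x ∈ ∂Ω satisfy limsup_{r→0} |B(x,r) ∩ Ω|/rⁿ = 0 and D̄Φ(x) < ∞, so that min{|A_{ρ,2ρ,Ω}|, |B(x,ρ/2) ∩ Ω|} ≤ c|B(x,ρ) ∩ Ω| for all 0 < ρ ≤ r′ with some r′ > 0. Fix 0 < r ≤ r′/2 and assume |A_{r,2r,Ω}| < |B(x,r/2) ∩ Ω|. Then for every integer j ≥ 1 with 2^j r ≤ r′ one has min{ |A_{2^{j−1} r, 2^{j} r, Ω}| , |B(x, 2^{j−2} r) ∩ Ω| } = |A_{2^{j−1} r, 2^{j} r, Ω}|, and moreover |A_{2^{j−1} r, 2^{j} r, Ω}| ≤ (c+1)^j |B(x,r) ∩ Ω|. -/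

import Mathlib

open MeasureTheory Metric Set Filter
open scoped ENNReal Topology RealInnerProductSpace

noncomputable section

/-- `g` is a weak (distributional) gradient of `u` on `Ω`: the integration-by-parts
identity holds against all smooth test functions compactly supported in `Ω`. -/
def IsWeakGradient {n : ℕ} (Ω : Set (EuclideanSpace ℝ (Fin n)))
    (u : EuclideanSpace ℝ (Fin n) → ℝ) (g : EuclideanSpace ℝ (Fin n) → EuclideanSpace ℝ (Fin n)) :
    Prop :=
  ∀ φ : EuclideanSpace ℝ (Fin n) → ℝ, ContDiff ℝ (⊤ : ℕ∞) φ → HasCompactSupport φ → tsupport φ ⊆ Ω →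
    ∀ v : EuclideanSpace ℝ (Fin n),
      ∫ x in Ω, u x * fderiv ℝ φ x v = - ∫ x in Ω, ⟪g x, v⟫ * φ x

/-- `u ∈ W^{1,p}(Ω)`: `u ∈ L^p(Ω)` and `u` has a weak gradient in `L^p(Ω; ℝⁿ)`. -/
def MemW1p {n : ℕ} (p : ℝ) (Ω : Set (EuclideanSpace ℝ (Fin n)))
    (u : EuclideanSpace ℝ (Fin n) → ℝ) : Prop :=
  MemLp u (ENNReal.ofReal p) (volume.restrict Ω) ∧
    ∃ g, IsWeakGradient Ω u g ∧ MemLp g (ENNReal.ofReal p) (volume.restrict Ω)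

open Classical in
/-- A choice of weak gradient of `u` on `Ω` lying in `L^p(Ω; ℝⁿ)` (zero if none exists);
any two such choices coincide a.e. on an open `Ω`. -/
def weakGradient {n : ℕ} (p : ℝ) (Ω : Set (EuclideanSpace ℝ (Fin n)))
    (u : EuclideanSpace ℝ (Fin n) → ℝ) : EuclideanSpace ℝ (Fin n) → EuclideanSpace ℝ (Fin n) :=
  if h : ∃ g, IsWeakGradient Ω u g ∧ MemLp g (ENNReal.ofReal p) (volume.restrict Ω) then h.choose
  else 0

/-- The Sobolev norm `‖u‖_{W^{1,p}(Ω)} = (∫_Ω |u|^p + |∇u|^p)^{1/p}`. -/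
def W1pNorm {n : ℕ} (p : ℝ) (Ω : Set (EuclideanSpace ℝ (Fin n)))
    (u : EuclideanSpace ℝ (Fin n) → ℝ) : ℝ :=
  (∫ x in Ω, |u x| ^ p + ‖weakGradient p Ω u x‖ ^ p) ^ (1 / p)

/-- `Ω ⊆ ℝⁿ` is a bounded Sobolev `(p,q)`-extension domain: a bounded domain such that
there is a bounded extension operator `E : W^{1,p}(Ω) → W^{1,q}(ℝⁿ)`. -/
def IsExtensionDomain (n : ℕ) (p q : ℝ) (Ω : Set (EuclideanSpace ℝ (Fin n))) : Prop :=
  IsOpen Ω ∧ IsConnected Ω ∧ Bornology.IsBounded Ω ∧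
    ∃ (Ext : (EuclideanSpace ℝ (Fin n) → ℝ) → (EuclideanSpace ℝ (Fin n) → ℝ)) (C : ℝ), 0 < C ∧
      ∀ u, MemW1p p Ω u →
        (∀ x ∈ Ω, Ext u x = u x) ∧ MemW1p q univ (Ext u) ∧
          W1pNorm q univ (Ext u) ≤ C * W1pNorm p Ω u

/-- The Sobolev conjugate exponent `q* = qn/(n-q)` for `q < n`, and `q* = ∞` for `q ≥ n`. -/
def qStar (n : ℕ) (q : ℝ) : ℝ≥0∞ :=
  if q < n then ENNReal.ofReal (q * n / (n - q)) else ∞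

end

noncomputable section

/-- `W₀^p(U, Ω)`: continuous Sobolev functions on `Ω` vanishing on `Ω \ U`. -/
def W0p {n : ℕ} (p : ℝ) (U Ω : Set (EuclideanSpace ℝ (Fin n))) :
    Set (EuclideanSpace ℝ (Fin n) → ℝ) :=
  {u | ContinuousOn u Ω ∧ MemW1p p Ω u ∧ ∀ x ∈ Ω \ U, u x = 0}

/-- The `q`-Dirichlet energy `Γ^q_U(u)` on `U` with respect to the boundary value `u`. -/
def dirichletEnergy {n : ℕ} (q : ℝ) (U Ω : Set (EuclideanSpace ℝ (Fin n)))
    (u : EuclideanSpace ℝ (Fin n) → ℝ) : ℝ :=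
  sInf {t | ∃ v, MemW1p q U v ∧ (∀ x ∈ U ∩ Ω, v x = u x) ∧
    t = (∫ x in U, ‖weakGradient q U v x‖ ^ q) ^ (1 / q)}

open Classical in
/-- The set function `Φ` associated to a Sobolev `(p,q)`-extension domain `Ω`:
`Φ(U) = sup { (Γ^q_U(u) / ‖u‖_{W^{1,p}(U∩Ω)})^k : u ∈ W₀^p(U,Ω) }` with `1/k = 1/q - 1/p`,
and `Φ(U) = 0` if `U` does not meet `Ω`. -/
def setFunPhi {n : ℕ} (p q : ℝ) (Ω : Set (EuclideanSpace ℝ (Fin n)))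
    (U : Set (EuclideanSpace ℝ (Fin n))) : ℝ :=
  if (U ∩ Ω).Nonempty then
    sSup {t | ∃ u ∈ W0p p U Ω,
      t = (dirichletEnergy q U Ω u / W1pNorm p (U ∩ Ω) u) ^ ((1 / q - 1 / p)⁻¹)}
  else 0

/-- The upper derivative `D̄Φ(x) = limsup_{r → 0⁺} Φ(B(x,r)) / |B(x,r)|`. -/
def upperDeriv {n : ℕ} (Φ : Set (EuclideanSpace ℝ (Fin n)) → ℝ)
    (x : EuclideanSpace ℝ (Fin n)) : ℝ≥0∞ :=
  Filter.limsup (fun r : ℝ => ENNReal.ofReal (Φ (ball x r)) / volume (ball x r)) (𝓝[>] 0)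

/-- The lower derivative `D̲Φ(x) = liminf_{r → 0⁺} Φ(B(x,r)) / |B(x,r)|`. -/
def lowerDeriv {n : ℕ} (Φ : Set (EuclideanSpace ℝ (Fin n)) → ℝ)
    (x : EuclideanSpace ℝ (Fin n)) : ℝ≥0∞ :=
  Filter.liminf (fun r : ℝ => ENNReal.ofReal (Φ (ball x r)) / volume (ball x r)) (𝓝[>] 0)

/-- The annulus `A_{r₁,r₂,Ω} = {y : r₁ < |y - x| < r₂} ∩ Ω` centred at `x`. -/
def annulus {n : ℕ} (x : EuclideanSpace ℝ (Fin n)) (r₁ r₂ : ℝ)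
    (Ω : Set (EuclideanSpace ℝ (Fin n))) : Set (EuclideanSpace ℝ (Fin n)) :=
  {y | r₁ < dist y x ∧ dist y x < r₂} ∩ Ω

/-- `Φ` is a quasiadditive set function on the collection `M` of open subsets of `ℝⁿ`,
with quasiadditivity constant `C`. -/
structure IsQuasiadditive {n : ℕ} (M : Set (Set (EuclideanSpace ℝ (Fin n))))
    (Φ : Set (EuclideanSpace ℝ (Fin n)) → ℝ) (C : ℝ) : Prop where
  open_mem : ∀ U ∈ M, IsOpen U
  nonneg : ∀ U ∈ M, 0 ≤ Φ U
  mono : ∀ U₁ ∈ M, ∀ U₂ ∈ M, U₁ ⊆ U₂ → Φ U₁ ≤ Φ U₂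
  pos : 0 < C
  quasiadd : ∀ U : ℕ → Set (EuclideanSpace ℝ (Fin n)), (∀ i, U i ∈ M) →
    Pairwise (Function.onFun Disjoint U) → (⋃ i, U i) ∈ M →
      ∑' i, ENNReal.ofReal (Φ (U i)) ≤ ENNReal.ofReal (C * Φ (⋃ i, U i))

end

noncomputable section

lemma ball_split_aux {n : ℕ} (hn : 2 ≤ n) (x : EuclideanSpace ℝ (Fin n)) (R : ℝ)
    (Ω : Set (EuclideanSpace ℝ (Fin n))) :
    volume (ball x R ∩ Ω) ≤ volume (ball x (R/2) ∩ Ω) + volume (annulus x (R/2) R Ω) := by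
  haveI : NeZero n := ⟨by omega⟩
  have hs : volume (sphere x (R/2)) = 0 := Measure.addHaar_sphere volume x (R/2)
  have hsub : ball x R ∩ Ω ⊆ (ball x (R/2) ∩ Ω ∪ annulus x (R/2) R Ω) ∪ sphere x (R/2) := by
    intro y hy
    rcases lt_trichotomy (dist y x) (R/2) with h | h | h
    · exact Or.inl (Or.inl ⟨mem_ball.mpr h, hy.2⟩)
    · exact Or.inr (mem_sphere.mpr h)
    · exact Or.inl (Or.inr ⟨⟨h, mem_ball.mp hy.1⟩, hy.2⟩)
  calc volume (ball x R ∩ Ω)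
      ≤ volume ((ball x (R/2) ∩ Ω ∪ annulus x (R/2) R Ω) ∪ sphere x (R/2)) := measure_mono hsub
    _ ≤ volume (ball x (R/2) ∩ Ω ∪ annulus x (R/2) R Ω) + volume (sphere x (R/2)) :=
        measure_union_le _ _
    _ = volume (ball x (R/2) ∩ Ω ∪ annulus x (R/2) R Ω) := by rw [hs, add_zero]
    _ ≤ volume (ball x (R/2) ∩ Ω) + volume (annulus x (R/2) R Ω) := measure_union_le _ _

/-- **Iteration claim.** In the setting of the decay lemma, assume the min-decay inequality
holds for all radii `0 < ρ ≤ r'`, fix `0 < r ≤ r'/2` and assume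
`|A_{r,2r,Ω}| < |B(x,r/2) ∩ Ω|`. Then for each `j ≥ 1` with `2^j r ≤ r'` the minimum
`min{|A_{2^{j-1}r, 2^j r, Ω}|, |B(x, 2^{j-2}r) ∩ Ω|}` is attained by the annulus term and
`|A_{2^{j-1}r, 2^j r, Ω}| ≤ (c+1)^j |B(x,r) ∩ Ω|`. -/
theorem annulus_iteration {n : ℕ} (hn : 2 ≤ n) (c p q : ℝ) (hc0 : 0 < c) (hc1 : c < 1 / 2)
    (hq : 1 ≤ q) (hqp : q < p) (hpq : ENNReal.ofReal p < qStar n q)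
    (Ω : Set (EuclideanSpace ℝ (Fin n))) (hΩ : IsExtensionDomain n p q Ω)
    (x : EuclideanSpace ℝ (Fin n)) (hx : x ∈ frontier Ω)
    (hdens : Filter.limsup
      (fun r : ℝ => volume (ball x r ∩ Ω) / ENNReal.ofReal (r ^ n)) (𝓝[>] 0) = 0)
    (hD : upperDeriv (setFunPhi p q Ω) x < ⊤)
    (r' : ℝ) (hr' : 0 < r')
    (hmin : ∀ ρ : ℝ, 0 < ρ → ρ ≤ r' →
      min (volume (annulus x ρ (2 * ρ) Ω)) (volume (ball x (ρ / 2) ∩ Ω)) ≤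
        ENNReal.ofReal c * volume (ball x ρ ∩ Ω))
    (r : ℝ) (hr : 0 < r) (hrr' : r ≤ r' / 2)
    (hA : volume (annulus x r (2 * r) Ω) < volume (ball x (r / 2) ∩ Ω)) :
    ∀ j : ℕ, 1 ≤ j → (2 : ℝ) ^ j * r ≤ r' →
      min (volume (annulus x ((2 : ℝ) ^ ((j : ℝ) - 1) * r) ((2 : ℝ) ^ (j : ℝ) * r) Ω))
          (volume (ball x ((2 : ℝ) ^ ((j : ℝ) - 2) * r) ∩ Ω)) =
        volume (annulus x ((2 : ℝ) ^ ((j : ℝ) - 1) * r) ((2 : ℝ) ^ (j : ℝ) * r) Ω) ∧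
      volume (annulus x ((2 : ℝ) ^ ((j : ℝ) - 1) * r) ((2 : ℝ) ^ (j : ℝ) * r) Ω) ≤
        ENNReal.ofReal ((c + 1) ^ j) * volume (ball x r ∩ Ω) := by
  have hB0 : 0 < volume (ball x (r/2) ∩ Ω) := lt_of_le_of_lt zero_le hA
  have hBfin : ∀ R : ℝ, volume (ball x R ∩ Ω) < ⊤ := fun R =>
    lt_of_le_of_lt (measure_mono inter_subset_left) measure_ball_lt_top
  have key : ∀ j : ℕ, 1 ≤ j → (2:ℝ)^j * r ≤ r' →
      (min (volume (annulus x ((2:ℝ)^j*r/2) ((2:ℝ)^j*r) Ω)) (volume (ball x ((2:ℝ)^j*r/4) ∩ Ω))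
        = volume (annulus x ((2:ℝ)^j*r/2) ((2:ℝ)^j*r) Ω)) ∧
      volume (annulus x ((2:ℝ)^j*r/2) ((2:ℝ)^j*r) Ω) ≤
        ENNReal.ofReal ((c+1)^j) * volume (ball x r ∩ Ω) ∧
      volume (ball x ((2:ℝ)^j*r) ∩ Ω) ≤ ENNReal.ofReal ((c+1)^j) * volume (ball x r ∩ Ω) := by
    intro j hj
    induction j, hj using Nat.le_induction with
    | base =>
      intro h2r
      have e1 : (2:ℝ)^1*r/2 = r := by norm_num
      have e2 : (2:ℝ)^1*r/4 = r/2 := by ring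
      have e3 : (2:ℝ)^1*r = 2*r := by norm_num
      rw [e1, e2, e3]
      have hr1 : r ≤ r' := by linarith
      have hmin1 := hmin r hr hr1
      rw [min_eq_left hA.le] at hmin1
      refine ⟨min_eq_left hA.le, ?_, ?_⟩
      · refine hmin1.trans (mul_le_mul_left (ENNReal.ofReal_le_ofReal ?_) _)
        nlinarith
      · have hsplit := ball_split_aux hn x (2*r) Ω
        rw [show (2:ℝ)*r/2 = r by ring] at hsplit
        calc volume (ball x (2*r) ∩ Ω)
            ≤ volume (ball x r ∩ Ω) + volume (annulus x r (2*r) Ω) := hsplit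
          _ ≤ volume (ball x r ∩ Ω) + ENNReal.ofReal c * volume (ball x r ∩ Ω) := by
              gcongr
          _ = (1 + ENNReal.ofReal c) * volume (ball x r ∩ Ω) := by ring
          _ ≤ ENNReal.ofReal ((c+1)^1) * volume (ball x r ∩ Ω) := by
              refine mul_le_mul_left ?_ _
              rw [pow_one, ← ENNReal.ofReal_one, ← ENNReal.ofReal_add (by norm_num) hc0.le]
              exact ENNReal.ofReal_le_ofReal (by linarith)
    | succ j hj ih =>
      intro h2r
      set R := (2:ℝ)^j * r with hR
      have hRpos : 0 < R := by positivity
      have hR' : (2:ℝ)^(j+1)*r = 2*R := by rw [hR]; ring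
      have hRle2 : 2*R ≤ r' := by rw [← hR']; exact h2r
      have hRr' : R ≤ r' := by linarith
      obtain ⟨ihmin, ihann, ihball⟩ := ih hRr'
      rw [show (2:ℝ)^(j+1)*r/2 = R by rw [hR]; ring,
          show (2:ℝ)^(j+1)*r/4 = R/2 by rw [hR]; ring, hR']
      have hminR := hmin R hRpos hRr'
      set V := volume (ball x (R/2) ∩ Ω) with hV
      have hVpos : 0 < V := by
        refine hB0.trans_le (measure_mono (inter_subset_inter_left _ (ball_subset_ball ?_)))
        have h1 : (1:ℝ) ≤ 2^j := one_le_pow₀ (by norm_num)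
        rw [hR]; nlinarith
      have hVfin : V < ⊤ := hBfin _
      -- previous annulus ≤ V
      have hprev : volume (annulus x (R/2) R Ω) ≤ V := by
        have := min_eq_left_iff.mp ihmin
        refine this.trans (measure_mono (inter_subset_inter_left _ (ball_subset_ball ?_)))
        linarith
      -- ball at scale R bounded by 2V
      have hball2V : volume (ball x R ∩ Ω) ≤ 2 * V := by
        calc volume (ball x R ∩ Ω) ≤ V + volume (annulus x (R/2) R Ω) := ball_split_aux hn x R Ω
          _ ≤ V + V := by gcongr
          _ = 2 * V := (two_mul V).symm
      -- the min at scale j+1 is attained by the annulus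
      have hcase : volume (annulus x R (2*R) Ω) ≤ V := by
        by_contra hcase
        push_neg at hcase
        rw [min_eq_right hcase.le] at hminR
        have hlt : V ≤ ENNReal.ofReal (2*c) * V := by
          calc V ≤ ENNReal.ofReal c * volume (ball x R ∩ Ω) := hminR
            _ ≤ ENNReal.ofReal c * (2 * V) := by gcongr
            _ = ENNReal.ofReal (2*c) * V := by
                rw [ENNReal.ofReal_mul (by norm_num : (0:ℝ) ≤ 2)]
                simp [ENNReal.ofReal_ofNat]; ring
        have hlt2 : ENNReal.ofReal (2*c) * V < 1 * V :=
          (ENNReal.mul_lt_mul_iff_left hVpos.ne' hVfin.ne).mpr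
            (ENNReal.ofReal_lt_one.mpr (by linarith))
        rw [one_mul] at hlt2
        exact absurd (hlt.trans_lt hlt2) (lt_irrefl V)
      rw [min_eq_left hcase] at hminR
      refine ⟨min_eq_left hcase, ?_, ?_⟩
      · calc volume (annulus x R (2*R) Ω)
            ≤ ENNReal.ofReal c * volume (ball x R ∩ Ω) := hminR
          _ ≤ ENNReal.ofReal c * (ENNReal.ofReal ((c+1)^j) * volume (ball x r ∩ Ω)) := by
              gcongr
          _ = ENNReal.ofReal (c * (c+1)^j) * volume (ball x r ∩ Ω) := by
              rw [ENNReal.ofReal_mul hc0.le]; ring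
          _ ≤ ENNReal.ofReal ((c+1)^(j+1)) * volume (ball x r ∩ Ω) := by
              refine mul_le_mul_left (ENNReal.ofReal_le_ofReal ?_) _
              have : (0:ℝ) ≤ (c+1)^j := by positivity
              rw [pow_succ]
              nlinarith
      · have hsplit := ball_split_aux hn x (2*R) Ω
        rw [show (2:ℝ)*R/2 = R by ring] at hsplit
        calc volume (ball x (2*R) ∩ Ω)
            ≤ volume (ball x R ∩ Ω) + volume (annulus x R (2*R) Ω) := hsplit
          _ ≤ volume (ball x R ∩ Ω) + ENNReal.ofReal c * volume (ball x R ∩ Ω) := by gcongr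
          _ = (1 + ENNReal.ofReal c) * volume (ball x R ∩ Ω) := by ring
          _ ≤ ENNReal.ofReal (c+1) * (ENNReal.ofReal ((c+1)^j) * volume (ball x r ∩ Ω)) := by
              refine mul_le_mul' ?_ ihball
              rw [← ENNReal.ofReal_one, ← ENNReal.ofReal_add (by norm_num) hc0.le]
              exact ENNReal.ofReal_le_ofReal (by linarith)
          _ = ENNReal.ofReal ((c+1)^(j+1)) * volume (ball x r ∩ Ω) := by
              rw [pow_succ, ENNReal.ofReal_mul (by positivity : (0:ℝ) ≤ (c+1)^j)]; ring
  intro j hj hjr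
  obtain ⟨k1, k2, _⟩ := key j hj hjr
  have e1 : (2:ℝ)^((j:ℝ)-1) * r = (2:ℝ)^j*r/2 := by
    rw [Real.rpow_sub two_pos, Real.rpow_one, Real.rpow_natCast]; ring
  have e2 : (2:ℝ)^((j:ℝ)-2) * r = (2:ℝ)^j*r/4 := by
    rw [Real.rpow_sub two_pos, Real.rpow_natCast, show (2:ℝ)^(2:ℝ) = 4 by norm_num]; ring
  have e3 : (2:ℝ)^((j:ℝ)) * r = (2:ℝ)^j*r := by rw [Real.rpow_natCast]
  rw [e1, e2, e3]
  exact ⟨k1, k2⟩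


end
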